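/- Let 𝒱 > 0 and let β* be a γ-zero-gradient point with Var(V(β*)) > 0. Then there exist γ' > 0 and a γ'-zero-gradient point β' with Sharpe(β') = Sharpe(β*) and √Var(V(β')) = 𝒱; explicitly, β' = u·β* and γ' = γ/u with u = 𝒱/√Var(V(β*)). -/

import Mathlib

/-!
Scaling a position by `u > 0` acts affinely on the portfolio value,
`R(u • β) = u R(β) + (1 - u) V₀`, because the transaction costs `ν |⟨K_j, β⟩|` are positively
homogeneous. Hence the excess mean and the standard deviation of `V` both scale by `u`, so the Sharpe
ratio is unchanged, while the centred value `R - E[R]` scales by `u` and the signs `sign ⟨K_j, β⟩`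
do not change. In the zero-gradient condition the factor `u` is then absorbed by replacing `γ` with
`γ / u`, and choosing `u = 𝒱 / √Var(V(β*))` gives the volatility `𝒱`.
-/

open MeasureTheory ProbabilityTheory
open scoped InnerProductSpace

/-- The random portfolio value `R(β) = V₀ + ⟨D, β⟩ − ν ∑_j |⟨K_j, β⟩|`. -/
noncomputable def Rport {Ω : Type*} {m q : ℕ} (V0 ν : ℝ)
    (D : Ω → EuclideanSpace ℝ (Fin m)) (K : Fin q → Ω → EuclideanSpace ℝ (Fin m))
    (β : EuclideanSpace ℝ (Fin m)) (ω : Ω) : ℝ :=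
  V0 + ⟪D ω, β⟫_ℝ - ν * ∑ j, |⟪K j ω, β⟫_ℝ|

/-- The terminal portfolio value `V(β) = R(β) · S₀`. -/
noncomputable def Vport {Ω : Type*} {m q : ℕ} (V0 S0 ν : ℝ)
    (D : Ω → EuclideanSpace ℝ (Fin m)) (K : Fin q → Ω → EuclideanSpace ℝ (Fin m))
    (β : EuclideanSpace ℝ (Fin m)) (ω : Ω) : ℝ :=
  Rport V0 ν D K β ω * S0

/-- The Sharpe ratio `Sharpe(β) = (E[V(β)] − V₀S₀)/√Var(V(β))`. -/
noncomputable def sharpeRatio {Ω : Type*} [MeasurableSpace Ω] (P : Measure Ω) {m q : ℕ}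
    (V0 S0 ν : ℝ) (D : Ω → EuclideanSpace ℝ (Fin m)) (K : Fin q → Ω → EuclideanSpace ℝ (Fin m))
    (β : EuclideanSpace ℝ (Fin m)) : ℝ :=
  ((∫ ω, Vport V0 S0 ν D K β ω ∂P) - V0 * S0) /
    Real.sqrt (variance (Vport V0 S0 ν D K β) P)

/-- The mean–variance objective `F_γ(β) = E[V(β)] − γ Var(V(β))`. -/
noncomputable def Fobj {Ω : Type*} [MeasurableSpace Ω] (P : Measure Ω) {m q : ℕ}
    (V0 S0 ν : ℝ) (D : Ω → EuclideanSpace ℝ (Fin m)) (K : Fin q → Ω → EuclideanSpace ℝ (Fin m))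
    (γ : ℝ) (β : EuclideanSpace ℝ (Fin m)) : ℝ :=
  (∫ ω, Vport V0 S0 ν D K β ω ∂P) - γ * variance (Vport V0 S0 ν D K β) P

/-- `β` is a `γ`-zero-gradient point: `P(⟨K_j, β⟩ = 0) = 0` for every `j` and
`E[(D − ν ∑_j sign(⟨K_j, β⟩) K_j) · S₀ · (1 − 2γS₀(R(β) − E[R(β)]))] = 0` in `ℝ^m`. -/
def ZeroGrad {Ω : Type*} [MeasurableSpace Ω] (P : Measure Ω) {m q : ℕ}
    (V0 S0 ν : ℝ) (D : Ω → EuclideanSpace ℝ (Fin m)) (K : Fin q → Ω → EuclideanSpace ℝ (Fin m))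
    (γ : ℝ) (β : EuclideanSpace ℝ (Fin m)) : Prop :=
  (∀ j, P {ω | ⟪K j ω, β⟫_ℝ = 0} = 0) ∧
  (∫ ω, (S0 * (1 - 2 * γ * S0 * (Rport V0 ν D K β ω - ∫ ω', Rport V0 ν D K β ω' ∂P))) •
      (D ω - ν • ∑ j, Real.sign ⟪K j ω, β⟫_ℝ • K j ω) ∂P) = 0

lemma Real.sign_mul_of_pos {u : ℝ} (hu : 0 < u) (x : ℝ) : Real.sign (u * x) = Real.sign x := by
  rcases lt_trichotomy x 0 with hx | rfl | hx
  · rw [Real.sign_of_neg hx, Real.sign_of_neg (mul_neg_of_pos_of_neg hu hx)]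
  · rw [mul_zero]
  · rw [Real.sign_of_pos hx, Real.sign_of_pos (mul_pos hu hx)]

section Affine

variable {Ω : Type*} [MeasurableSpace Ω] {P : Measure Ω} [IsProbabilityMeasure P] {X : Ω → ℝ}

lemma integral_const_mul_add (hX : Integrable X P) (a b : ℝ) :
    ∫ ω, (a * X ω + b) ∂P = a * ∫ ω, X ω ∂P + b := by
  rw [integral_add (hX.const_mul a) (integrable_const b), integral_const_mul, integral_const,
    probReal_univ, one_smul]

lemma variance_const_mul_add (hX : AEStronglyMeasurable X P) (a b : ℝ) :
    variance (fun ω => a * X ω + b) P = a ^ 2 * variance X P := by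
  rw [variance_add_const (hX.const_mul a), variance_const_mul]

end Affine

section Portfolio

variable {Ω : Type*} {m q : ℕ} {V0 S0 ν : ℝ}
  {D : Ω → EuclideanSpace ℝ (Fin m)} {K : Fin q → Ω → EuclideanSpace ℝ (Fin m)}
  {β : EuclideanSpace ℝ (Fin m)} {u : ℝ}

lemma integrable_Rport [MeasurableSpace Ω] {P : Measure Ω} [IsFiniteMeasure P]
    (hD : Integrable D P) (hK : ∀ j, Integrable (K j) P) (β : EuclideanSpace ℝ (Fin m)) :
    Integrable (Rport V0 ν D K β) P :=
  ((integrable_const V0).add (hD.inner_const β)).sub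
    ((integrable_finsetSum _ fun j _ => ((hK j).inner_const β).abs).const_mul ν)

lemma Rport_smul (hu : 0 ≤ u) (ω : Ω) :
    Rport V0 ν D K (u • β) ω = u * Rport V0 ν D K β ω + (1 - u) * V0 := by
  simp only [Rport, real_inner_smul_right, abs_mul, abs_of_nonneg hu, ← Finset.mul_sum]
  ring

lemma Vport_smul (hu : 0 ≤ u) :
    Vport V0 S0 ν D K (u • β) = fun ω => u * Vport V0 S0 ν D K β ω + (1 - u) * V0 * S0 := by
  ext ω
  rw [Vport, Vport, Rport_smul hu]
  ring

variable [MeasurableSpace Ω] {P : Measure Ω} [IsProbabilityMeasure P]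

lemma sqrt_variance_Vport_smul (hu : 0 ≤ u)
    (hV : AEStronglyMeasurable (Vport V0 S0 ν D K β) P) :
    Real.sqrt (variance (Vport V0 S0 ν D K (u • β)) P) =
      u * Real.sqrt (variance (Vport V0 S0 ν D K β) P) := by
  rw [Vport_smul hu, variance_const_mul_add hV, Real.sqrt_mul (sq_nonneg u),
    Real.sqrt_sq hu]

lemma sharpeRatio_smul (hu : 0 < u) (hV : Integrable (Vport V0 S0 ν D K β) P) :
    sharpeRatio P V0 S0 ν D K (u • β) = sharpeRatio P V0 S0 ν D K β := by
  have hmean : ∫ ω, Vport V0 S0 ν D K (u • β) ω ∂P - V0 * S0 =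
      u * (∫ ω, Vport V0 S0 ν D K β ω ∂P - V0 * S0) := by
    rw [Vport_smul hu.le, integral_const_mul_add hV]
    ring
  rw [sharpeRatio, sharpeRatio, hmean, sqrt_variance_Vport_smul hu.le hV.aestronglyMeasurable,
    mul_div_mul_left _ _ hu.ne']

lemma Rport_smul_sub_integral (hu : 0 ≤ u) (hR : Integrable (Rport V0 ν D K β) P) (ω : Ω) :
    Rport V0 ν D K (u • β) ω - ∫ ω', Rport V0 ν D K (u • β) ω' ∂P =
      u * (Rport V0 ν D K β ω - ∫ ω', Rport V0 ν D K β ω' ∂P) := by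
  simp only [Rport_smul hu]
  rw [integral_const_mul_add hR]
  ring

lemma ZeroGrad.smul {γ : ℝ} (hu : 0 < u) (hR : Integrable (Rport V0 ν D K β) P)
    (h : ZeroGrad P V0 S0 ν D K γ β) : ZeroGrad P V0 S0 ν D K (γ / u) (u • β) := by
  obtain ⟨hnull, hgrad⟩ := h
  have hsign : ∀ j ω, Real.sign ⟪K j ω, u • β⟫_ℝ = Real.sign ⟪K j ω, β⟫_ℝ := fun j ω => by
    rw [real_inner_smul_right, Real.sign_mul_of_pos hu]
  have hweight : ∀ ω, 2 * (γ / u) * S0 *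
      (Rport V0 ν D K (u • β) ω - ∫ ω', Rport V0 ν D K (u • β) ω' ∂P) =
      2 * γ * S0 * (Rport V0 ν D K β ω - ∫ ω', Rport V0 ν D K β ω' ∂P) := fun ω => by
    rw [Rport_smul_sub_integral hu.le hR]
    field_simp
  refine ⟨fun j => ?_, ?_⟩
  · simpa only [real_inner_smul_right, mul_eq_zero, hu.ne', false_or] using hnull j
  · simp only [hsign, hweight]
    exact hgrad

end Portfolio

theorem stmt9_general {Ω : Type*} [MeasurableSpace Ω] (P : Measure Ω) [IsProbabilityMeasure P]
    {m q : ℕ}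
    (V0 S0 ν : ℝ)
    (D : Ω → EuclideanSpace ℝ (Fin m)) (K : Fin q → Ω → EuclideanSpace ℝ (Fin m))
    (hD : MemLp D 2 P) (hK : ∀ j, MemLp (K j) 2 P)
    (γ 𝒱 : ℝ) (hγ : 0 < γ) (h𝒱 : 0 < 𝒱)
    (βstar : EuclideanSpace ℝ (Fin m)) (hzg : ZeroGrad P V0 S0 ν D K γ βstar)
    (hvar : 0 < variance (Vport V0 S0 ν D K βstar) P) :
    ∃ γ' > (0 : ℝ), ∃ β' : EuclideanSpace ℝ (Fin m),
      ZeroGrad P V0 S0 ν D K γ' β' ∧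
      sharpeRatio P V0 S0 ν D K β' = sharpeRatio P V0 S0 ν D K βstar ∧
      Real.sqrt (variance (Vport V0 S0 ν D K β') P) = 𝒱 ∧
      β' = (𝒱 / Real.sqrt (variance (Vport V0 S0 ν D K βstar) P)) • βstar ∧
      γ' = γ / (𝒱 / Real.sqrt (variance (Vport V0 S0 ν D K βstar) P)) := by
  have hσ : 0 < Real.sqrt (variance (Vport V0 S0 ν D K βstar) P) := Real.sqrt_pos.mpr hvar
  have hu := div_pos h𝒱 hσ
  have hR : Integrable (Rport V0 ν D K βstar) P :=
    integrable_Rport (hD.integrable one_le_two) (fun j => (hK j).integrable one_le_two) βstar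
  have hV : Integrable (Vport V0 S0 ν D K βstar) P := hR.mul_const S0
  refine ⟨_, div_pos hγ hu, _, hzg.smul hu hR, sharpeRatio_smul hu hV, ?_, rfl, rfl⟩
  rw [sqrt_variance_Vport_smul hu.le hV.aestronglyMeasurable, div_mul_cancel₀ _ hσ.ne']

/-- given a target volatility `𝒱 > 0` and a `γ`-zero-gradient point `β*` with
positive variance, setting `u = 𝒱/√Var(V(β*))`, the point `β' = u·β*` is a `(γ/u)`-zero-gradient
point with the same Sharpe ratio as `β*` and volatility `√Var(V(β')) = 𝒱`. -/
theorem stmt9 {Ω : Type*} [MeasurableSpace Ω] (P : Measure Ω) [IsProbabilityMeasure P]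
    {m q : ℕ} (hm : 0 < m) (hq : 0 < q)
    (V0 S0 ν : ℝ) (hV0 : 0 < V0) (hS0 : 0 < S0) (hν : 0 ≤ ν)
    (D : Ω → EuclideanSpace ℝ (Fin m)) (K : Fin q → Ω → EuclideanSpace ℝ (Fin m))
    (hD : MemLp D 2 P) (hK : ∀ j, MemLp (K j) 2 P)
    (γ 𝒱 : ℝ) (hγ : 0 < γ) (h𝒱 : 0 < 𝒱)
    (βstar : EuclideanSpace ℝ (Fin m)) (hzg : ZeroGrad P V0 S0 ν D K γ βstar)
    (hvar : 0 < variance (Vport V0 S0 ν D K βstar) P) :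
    ∃ γ' > (0 : ℝ), ∃ β' : EuclideanSpace ℝ (Fin m),
      ZeroGrad P V0 S0 ν D K γ' β' ∧
      sharpeRatio P V0 S0 ν D K β' = sharpeRatio P V0 S0 ν D K βstar ∧
      Real.sqrt (variance (Vport V0 S0 ν D K β') P) = 𝒱 ∧
      β' = (𝒱 / Real.sqrt (variance (Vport V0 S0 ν D K βstar) P)) • βstar ∧
      γ' = γ / (𝒱 / Real.sqrt (variance (Vport V0 S0 ν D K βstar) P)) :=
  stmt9_general P V0 S0 ν D K hD hK γ 𝒱 hγ h𝒱 βstar hzg hvar
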